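/- arXiv:2107.03190 — 6 statements merged into one kernel-verified Lean document; each statement's English description precedes it below -/
import Mathlib

section
/- In a recursive SCM over finite-domain variables, for any endogenous variable Y, set X ⊆ V \ {Y}, value assignment x to X, and unit u: the potential response Y_x(u) equals Y_z(u), where Z = X ∩ An_{G_{X̄}}(Y) (the members of X that remain ancestors of Y in the graph with incoming edges to X removed) and z is the restriction of x to Z. -/
/-- Lemma 1 (interventional minimality).  In a recursive SCM (structural functions `f`
depending only on the parents `pa`, with a topological order `ord` witnessing acyclicity),
for any endogenous variable `Y ∉ X`, intervention values `x` and unit `u`: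
the potential response `Y_x(u)` equals `Y_z(u)` where
`Z = X ∩ An_{G_{X̄}}(Y)` is the set of members of `X` that remain ancestors of `Y`
in the graph with incoming edges to `X` removed, and `z` is the restriction of `x` to `Z`.
Potential responses are phrased as solutions `s` (resp. `s'`) of the submodel `M_x`
(resp. `M_z`) at `u`. -/
theorem interventional_minimality {V : Type} [DecidableEq V]
    (Dom : V → Type) (U : Type)
    (pa : V → Finset V)
    (f : ∀ v : V, ((w : V) → Dom w) → U → Dom v)
    (hdep : ∀ v g g' u, (∀ w ∈ pa v, g w = g' w) → f v g u = f v g' u)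
    (ord : V → ℕ) (hord : ∀ a b, a ∈ pa b → ord a < ord b)
    (Y : V) (X : Finset V) (hY : Y ∉ X)
    (x : ∀ v, Dom v) (u : U)
    (Z : Finset V)
    -- Z = X ∩ An_{G_{X̄}}(Y): ancestors computed with edges into X removed
    (hZ : ∀ v, v ∈ Z ↔ v ∈ X ∧ Relation.ReflTransGen (fun a b => a ∈ pa b ∧ b ∉ X) v Y)
    (s s' : ∀ v, Dom v)
    -- s solves the submodel M_x at u
    (hsX : ∀ v ∈ X, s v = x v) (hsF : ∀ v, v ∉ X → s v = f v s u)
    -- s' solves the submodel M_z at u  (z is the restriction of x to Z)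
    (hs'Z : ∀ v ∈ Z, s' v = x v) (hs'F : ∀ v, v ∉ Z → s' v = f v s' u) :
    s Y = s' Y := by
  have key : ∀ n v, ord v < n →
      Relation.ReflTransGen (fun a b => a ∈ pa b ∧ b ∉ X) v Y → s v = s' v := by
    intro n
    induction n with
    | zero => intro v hv; omega
    | succ n ih =>
      intro v hv hrel
      by_cases hx : v ∈ X
      · rw [hsX v hx, hs'Z v ((hZ v).mpr ⟨hx, hrel⟩)]
      · have hz : v ∉ Z := fun h => hx ((hZ v).mp h).1
        rw [hsF v hx, hs'F v hz]
        exact hdep v s s' u fun w hw =>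
          ih w (by have := hord w v hw; omega)
            (Relation.ReflTransGen.head ⟨hw, hx⟩ hrel)
  exact key (ord Y + 1) Y (by omega) Relation.ReflTransGen.refl
end

section
/- In a recursive SCM, for any unit u, endogenous variable Y, and intervention do(X = x): if W is a variable such that W ∉ An_{G_{X̄}}(Y) ∪ X, then the solution of Y in the submodel M_x at u does not depend on the structural function f_W; formally, replacing f_W by any other function yields the same value Y_x(u). -/
/-- Exclusion restrictions.  In a recursive SCM, if `W ∉ An_{G_{X̄}}(Y) ∪ X`
(`W` is not an ancestor of `Y` in the graph with incoming edges to `X` removed, and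
`W` is not intervened on), then the solution of `Y` in the submodel `M_x` at `u` does
not depend on the structural function `f_W`: replacing `f_W` by any other function `f'_W`
yields the same value `Y_x(u)`.  Solutions of the two (otherwise identical) models are
`s` and `s'`. -/
theorem exclusion_restriction {V : Type} [DecidableEq V]
    (Dom : V → Type) (U : Type)
    (pa : V → Finset V)
    (f f' : ∀ v : V, ((w : V) → Dom w) → U → Dom v)
    (hdep : ∀ v g g' u, (∀ w ∈ pa v, g w = g' w) → f v g u = f v g' u)
    (ord : V → ℕ) (hord : ∀ a b, a ∈ pa b → ord a < ord b)
    (Y W : V) (X : Finset V)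
    -- the two models agree everywhere except possibly on the function of W
    (hf' : ∀ v, v ≠ W → f' v = f v)
    -- W ∉ An_{G_{X̄}}(Y) ∪ X
    (hWanc : ¬ Relation.ReflTransGen (fun a b => a ∈ pa b ∧ b ∉ X) W Y)
    (hWX : W ∉ X)
    (x : ∀ v, Dom v) (u : U)
    (s s' : ∀ v, Dom v)
    -- s solves M_x at u (model with f), s' solves M'_x at u (model with f')
    (hsX : ∀ v ∈ X, s v = x v) (hsF : ∀ v, v ∉ X → s v = f v s u)
    (hs'X : ∀ v ∈ X, s' v = x v) (hs'F : ∀ v, v ∉ X → s' v = f' v s' u) :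
    s Y = s' Y := by
  suffices h : ∀ n v, ord v ≤ n →
      ¬ Relation.ReflTransGen (fun a b => a ∈ pa b ∧ b ∉ X) W v → s v = s' v by
    exact h (ord Y) Y le_rfl hWanc
  intro n
  induction n with
  | zero =>
    intro v hv hnanc
    by_cases hvX : v ∈ X
    · rw [hsX v hvX, hs'X v hvX]
    · rw [hsF v hvX, hs'F v hvX, hf' v (fun h => hnanc (h ▸ Relation.ReflTransGen.refl))]
      apply hdep
      intro w hw
      exact absurd (hord w v hw) (by omega)
  | succ n ih =>
    intro v hv hnanc
    by_cases hvX : v ∈ X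
    · rw [hsX v hvX, hs'X v hvX]
    · rw [hsF v hvX, hs'F v hvX, hf' v (fun h => hnanc (h ▸ Relation.ReflTransGen.refl))]
      apply hdep
      intro w hw
      refine ih w (by have := hord w v hw; omega) (fun hanc => hnanc ?_)
      exact hanc.tail ⟨hw, hvX⟩
end

section
/- In a recursive SCM, the composition property holds: for any unit u, disjoint sets X, W ⊆ V, variable Y ∉ X ∪ W, and values x, if W_x(u) = w (the potential response of W in M_x at u equals w), then Y_{x,w}(u) = Y_x(u). -/
/-- The composition property of structural counterfactuals.  In a recursive SCM,
for any unit `u`, disjoint sets `X, W ⊆ V`, variable `Y ∉ X ∪ W` and values `x`: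
if `W_x(u) = w` (here `w` is the value `s` gives to the variables of `W`, `s` being the
solution of `M_x` at `u`), then `Y_{x,w}(u) = Y_x(u)`, where `s'` is the solution of
`M_{x,w}` at `u`. -/
theorem composition_axiom {V : Type} [DecidableEq V]
    (Dom : V → Type) (U : Type)
    (pa : V → Finset V)
    (f : ∀ v : V, ((w : V) → Dom w) → U → Dom v)
    (hdep : ∀ v g g' u, (∀ w ∈ pa v, g w = g' w) → f v g u = f v g' u)
    (ord : V → ℕ) (hord : ∀ a b, a ∈ pa b → ord a < ord b)
    (X W : Finset V) (hdisj : Disjoint X W)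
    (Y : V) (hYX : Y ∉ X) (hYW : Y ∉ W)
    (x : ∀ v, Dom v) (u : U)
    (s s' : ∀ v, Dom v)
    -- s solves the submodel M_x at u
    (hsX : ∀ v ∈ X, s v = x v) (hsF : ∀ v, v ∉ X → s v = f v s u)
    -- s' solves the submodel M_{x,w} at u, where w = s restricted to W
    (hs'X : ∀ v ∈ X, s' v = x v) (hs'W : ∀ v ∈ W, s' v = s v)
    (hs'F : ∀ v, v ∉ X → v ∉ W → s' v = f v s' u) :
    s' Y = s Y := by
  have key : ∀ n, ∀ v, ord v < n → s' v = s v := by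
    intro n
    induction n with
    | zero => intro v h; omega
    | succ n ih =>
      intro v _
      by_cases hvX : v ∈ X
      · rw [hs'X v hvX, hsX v hvX]
      by_cases hvW : v ∈ W
      · exact hs'W v hvW
      rw [hs'F v hvX hvW, hsF v hvX]
      exact hdep v s' s u fun w hw => ih w (Nat.lt_of_lt_of_le (hord w v hw) (by omega))
  exact key (ord Y + 1) Y (by omega)
end

section
/- In a recursive SCM, for any counterfactual variable Y_x and unit u, the value Y_x(u) depends only on the exogenous variables attached to the counterfactual ancestors of Y_x: if two units u, u' agree on U_W for every W_z ∈ An(Y_x), then Y_x(u) = Y_x(u'). -/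
/-- Supporting lemma for the c-component factorization: in a recursive SCM with one
exogenous variable `u v : Uv v` attached to each endogenous variable `v`, the potential
response `Y_x(u)` depends only on the exogenous variables attached to the (base variables
of the) counterfactual ancestors of `Y_x`, i.e. on `U_W` for `W ∈ An_{G_{X̲}}(Y)`
(ancestors of `Y` in the graph with outgoing edges of `X` removed, per Definition 3):
if two units `u, u'` agree on `U_W` for every such `W`, then `Y_x(u) = Y_x(u')`.
Potential responses are phrased as solutions `s`, `s'` of `M_x` at `u`, `u'`. -/
theorem ctf_depends_only_on_ancestral_exogenous {V : Type} [DecidableEq V]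
    (Dom : V → Type) (Uv : V → Type)
    (pa : V → Finset V)
    (f : ∀ v : V, ((w : V) → Dom w) → Uv v → Dom v)
    (hdep : ∀ v g g' uv, (∀ w ∈ pa v, g w = g' w) → f v g uv = f v g' uv)
    (ord : V → ℕ) (hord : ∀ a b, a ∈ pa b → ord a < ord b)
    (Y : V) (X : Finset V) (x : ∀ v, Dom v)
    (u u' : ∀ v, Uv v)
    -- u and u' agree on the exogenous variables of every counterfactual ancestor of Y_x
    (hagree : ∀ W : V, Relation.ReflTransGen (fun a b => a ∈ pa b ∧ a ∉ X) W Y →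
        u W = u' W)
    (s s' : ∀ v, Dom v)
    -- s solves M_x at u, s' solves M_x at u'
    (hsX : ∀ v ∈ X, s v = x v) (hsF : ∀ v, v ∉ X → s v = f v s (u v))
    (hs'X : ∀ v ∈ X, s' v = x v) (hs'F : ∀ v, v ∉ X → s' v = f v s' (u' v)) :
    s Y = s' Y := by
  suffices h : ∀ n, ∀ W : V, ord W < n →
      Relation.ReflTransGen (fun a b => a ∈ pa b ∧ a ∉ X) W Y → s W = s' W by
    exact h (ord Y + 1) Y (Nat.lt_succ_self _) Relation.ReflTransGen.refl
  intro n
  induction n with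
  | zero => intro W hW _; omega
  | succ n ih =>
    intro W hW hreach
    by_cases hWX : W ∈ X
    · rw [hsX W hWX, hs'X W hWX]
    · rw [hsF W hWX, hs'F W hWX, hagree W hreach]
      apply hdep
      intro w hw
      by_cases hwX : w ∈ X
      · rw [hsX w hwX, hs'X w hwX]
      · exact ih w (by have := hord w W hw; omega)
          (Relation.ReflTransGen.head ⟨hw, hwX⟩ hreach)
end

section
/- Let P be a joint pmf on a finite product type factoring as P(w₁,…,wₙ) = ∏_{j=1}^k Q_j(w_{C_j}) where {C_j} partitions {1,…,n} and each Q_j is a pmf on the corresponding sub-product. Then each factor is recoverable from P by the telescoping marginal-ratio formula: for any topological enumeration w₁ < ⋯ < wₙ and any j, Q_j(w_{C_j}) = ∏_{i ∈ C_j} [ ∑_{w' : w'_l = w_l for l ≤ i} P(w') ] / [ ∑_{w' : w'_l = w_l for l ≤ i−1} P(w') ], whenever all denominators are positive. -/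
open Finset Classical

/-- Theorem 3, second part (equation (11)), abstracted.  Let `P` be a joint pmf over
variables `W₁ < ⋯ < Wₙ` factoring as `P(w) = ∏ⱼ Qⱼ(w_{Cⱼ})`, where the blocks
`Cⱼ = {i | B i = j}` partition the variables and each `Qⱼ` is a pmf on the corresponding
sub-product.  Then each factor is recoverable from `P` by the telescoping
marginal-ratio formula along the order: with prefix marginals
`S m (w) = ∑_{v : v_l = w_l for l < m} P(v)`, and all denominators positive,
`Qⱼ(w_{Cⱼ}) = ∏_{i ∈ Cⱼ} S_{i+1}(w) / S_i(w)`. -/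
theorem cfactor_recovery_by_prefix_ratios {n k : ℕ} (Val : Fin n → Type)
    [∀ i, Fintype (Val i)] [∀ i, DecidableEq (Val i)]
    (B : Fin n → Fin k)
    (Q : ∀ j : Fin k, (∀ i : {i : Fin n // B i = j}, Val i.1) → ℝ)
    (hQnn : ∀ j vj, 0 ≤ Q j vj)
    (hQsum : ∀ j, ∑ vj : ∀ i : {i : Fin n // B i = j}, Val i.1, Q j vj = 1)
    (P : (∀ i, Val i) → ℝ)
    (hfact : ∀ v, P v = ∏ j, Q j (fun i => v i.1))
    (w : ∀ i, Val i)
    (S : Fin (n + 1) → ℝ)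
    (hS : ∀ m : Fin (n + 1), S m =
      ∑ v ∈ univ.filter (fun v : ∀ i, Val i => ∀ l : Fin n, (l : ℕ) < (m : ℕ) → v l = w l),
        P v)
    (hpos : ∀ i : Fin n, 0 < S i.castSucc)
    (j : Fin k) :
    ∏ i ∈ univ.filter (fun i => B i = j), S i.succ / S i.castSucc
      = Q j (fun i => w i.1) := by
  classical
  -- block prefix marginals
  set T : Fin k → ℕ → ℝ := fun j' m =>
    ∑ vj : ∀ i : {i : Fin n // B i = j'}, Val i.1,
      if (∀ i : {i : Fin n // B i = j'}, (i.1 : ℕ) < m → vj i = w i.1) then Q j' vj else 0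
    with hT
  have hTnn : ∀ j' m, 0 ≤ T j' m := by
    intro j' m
    apply Finset.sum_nonneg
    intro vj _
    split
    · exact hQnn j' vj
    · exact le_refl 0
  -- Lemma A : S m = ∏ j', T j' m
  have hA : ∀ m : Fin (n+1), S m = ∏ j', T j' (m : ℕ) := by
    intro m
    rw [hS m, Finset.sum_filter]
    have hsplit : ∀ v : ∀ i, Val i,
        (if (∀ l : Fin n, (l:ℕ) < (m:ℕ) → v l = w l) then P v else 0)
        = ∏ j', (if (∀ i : {i : Fin n // B i = j'}, (i.1:ℕ) < (m:ℕ) → v i.1 = w i.1)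
            then Q j' (fun i => v i.1) else 0) := by
      intro v
      by_cases h : ∀ l : Fin n, (l:ℕ) < (m:ℕ) → v l = w l
      · rw [if_pos h, hfact v]
        refine Finset.prod_congr rfl (fun j' _ => ?_)
        rw [if_pos]
        intro i hi; exact h i.1 hi
      · push_neg at h
        obtain ⟨l, hl, hne⟩ := h
        rw [if_neg, Eq.comm]
        · apply Finset.prod_eq_zero (Finset.mem_univ (B l))
          rw [if_neg]
          push_neg
          exact ⟨⟨l, rfl⟩, hl, hne⟩
        · push_neg; exact ⟨l, hl, hne⟩
    simp_rw [hsplit]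
    -- exchange sum and product via the blockwise equivalence
    rw [Fintype.prod_sum]
    apply Fintype.sum_bijective
      (fun (v : ∀ i, Val i) => (fun j' (i : {i : Fin n // B i = j'}) => v i.1))
    · constructor
      · intro v v' hv
        funext i
        exact congrFun (congrFun hv (B i)) ⟨i, rfl⟩
      · intro G
        refine ⟨fun i => G (B i) ⟨i, rfl⟩, ?_⟩
        funext j' i
        obtain ⟨i, hi⟩ := i
        subst hi
        rfl
    · intro v
      rfl
  -- Lemma B : T j' 0 = 1
  have hB : ∀ j', T j' 0 = 1 := by
    intro j'
    simp only [hT]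
    exact (Finset.sum_congr rfl (fun vj _ =>
      if_pos (fun i hi => absurd hi (Nat.not_lt_zero _)))).trans (hQsum j')
  -- Lemma C : T j n = Q j (w restricted)
  have hC : T j n = Q j (fun i => w i.1) := by
    rw [hT]
    have : ∀ vj : ∀ i : {i : Fin n // B i = j}, Val i.1,
        (if (∀ i : {i : Fin n // B i = j}, (i.1 : ℕ) < n → vj i = w i.1) then Q j vj else 0)
        = if vj = (fun i : {i : Fin n // B i = j} => w i.1) then Q j vj else 0 := by
      intro vj
      congr 1
      simp only [eq_iff_iff]
      constructor
      · intro h; funext i; exact h i i.1.isLt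
      · intro h i _; rw [h]
    simp_rw [this]
    simp
  -- Lemma D : blocks not containing i don't change
  have hD : ∀ (i : Fin n) (j' : Fin k), B i ≠ j' → T j' ((i:ℕ)+1) = T j' (i:ℕ) := by
    intro i j' hij
    rw [hT]
    apply Finset.sum_congr rfl
    intro vj _
    congr 1
    simp only [eq_iff_iff]
    constructor
    · intro h x hx; exact h x (Nat.lt_succ_of_lt hx)
    · intro h x hx
      rcases Nat.lt_succ_iff_lt_or_eq.mp hx with h1 | h1
      · exact h x h1
      · exfalso; apply hij; rw [← x.2]; congr 1; exact Fin.ext h1.symm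
  -- positivity of T j' m for m < n (as m = i.castSucc)
  have hTpos : ∀ (i : Fin n) (j' : Fin k), 0 < T j' (i : ℕ) := by
    intro i j'
    have h1 : 0 < ∏ j'', T j'' (i : ℕ) := by
      have := hpos i
      rwa [hA i.castSucc] at this
    have h2 : T j' (i:ℕ) ≠ 0 := by
      intro h0
      rw [Finset.prod_eq_zero (Finset.mem_univ j') h0] at h1
      exact lt_irrefl 0 h1
    exact lt_of_le_of_ne (hTnn j' _) (Ne.symm h2)
  -- pointwise : for i with B i = j, S i.succ / S i.castSucc = T j (i+1) / T j i
  have hpt : ∀ i : Fin n, B i = j →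
      S i.succ / S i.castSucc = T j ((i:ℕ)+1) / T j (i:ℕ) := by
    intro i hij
    rw [hA i.succ, hA i.castSucc]
    have hsucc : ((i.succ : Fin (n+1)) : ℕ) = (i:ℕ) + 1 := rfl
    have hcast : ((i.castSucc : Fin (n+1)) : ℕ) = (i:ℕ) := rfl
    rw [hsucc, hcast]
    rw [← Finset.mul_prod_erase univ (fun j'' => T j'' ((i:ℕ)+1)) (Finset.mem_univ j),
        ← Finset.mul_prod_erase univ (fun j'' => T j'' (i:ℕ)) (Finset.mem_univ j)]
    have heq : ∏ j'' ∈ univ.erase j, T j'' ((i:ℕ)+1) = ∏ j'' ∈ univ.erase j, T j'' (i:ℕ) := by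
      apply Finset.prod_congr rfl
      intro j'' hj''
      exact hD i j'' (fun h => Finset.ne_of_mem_erase hj'' (h.symm.trans hij))
    rw [heq]
    have hR : ∏ j'' ∈ univ.erase j, T j'' (i:ℕ) ≠ 0 := by
      apply Finset.prod_ne_zero_iff.mpr
      intro j'' _
      exact (hTpos i j'').ne'
    rw [mul_div_mul_right _ _ hR]
  calc ∏ i ∈ univ.filter (fun i => B i = j), S i.succ / S i.castSucc
      = ∏ i ∈ univ.filter (fun i => B i = j), T j ((i:ℕ)+1) / T j (i:ℕ) := by
        apply Finset.prod_congr rfl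
        intro i hi
        exact hpt i (Finset.mem_filter.mp hi).2
    _ = ∏ i : Fin n, T j ((i:ℕ)+1) / T j (i:ℕ) := by
        apply Finset.prod_subset (Finset.filter_subset _ _)
        intro i _ hi
        simp only [Finset.mem_filter, Finset.mem_univ, true_and] at hi
        rw [hD i j hi]
        exact div_self (hTpos i j).ne'
    _ = ∏ m ∈ Finset.range n, T j (m+1) / T j m := by
        rw [Fin.prod_univ_eq_prod_range (fun m => T j (m+1) / T j m) n]
    _ = T j n / T j 0 := by
        have htel : ∀ (f : ℕ → ℝ) (N : ℕ), (∀ m, m < N → f m ≠ 0) → f 0 ≠ 0 →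
            ∏ m ∈ Finset.range N, f (m+1) / f m = f N / f 0 := by
          intro f N hf h0
          induction N with
          | zero => simp [div_self h0]
          | succ N ih =>
            rw [Finset.prod_range_succ, ih (fun m hm => hf m (Nat.lt_succ_of_lt hm))]
            have hN := hf N (Nat.lt_succ_self N)
            field_simp
        apply htel
        · intro m hm
          exact (hTpos ⟨m, hm⟩ j).ne'
        · rw [hB j]; exact one_ne_zero
    _ = Q j (fun i => w i.1) := by rw [hC, hB, div_one]
end

section
/- If a ctf-factor P(W_* = w_*) is consistent (neither condition (i) nor (ii) of inconsistency holds), then with W = V(W_*) and W' = V ∖ W, P(W_* = w_*) equals the interventional probability P_{w'}(w), where w and w' are the (well-defined, by consistency) value assignments consistent with w_* together with all the parent-intervention values ⋃ pa(w). -/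
open Finset Classical

/-- A finite structural causal model (see stmt 14 for the reading of the fields). -/
structure FinSCM (V : Type) [Fintype V] [DecidableEq V] (Dom : V → Type) where
  E : Type
  [fintypeE : Fintype E]
  [decEqE : DecidableEq E]
  UDom : E → Type
  [fintypeU : ∀ e, Fintype (UDom e)]
  P : (∀ e, UDom e) → ℝ
  pa : V → Finset V
  ue : V → Finset E
  f : ∀ v : V, ((w : V) → Dom w) → (∀ e, UDom e) → Dom v
  hf : ∀ v g g' u u', (∀ w ∈ pa v, g w = g' w) → (∀ e ∈ ue v, u e = u' e) →
        f v g u = f v g' u'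
  ord : V → ℕ
  hord : ∀ a b, a ∈ pa b → ord a < ord b
  hPnn : ∀ u, 0 ≤ P u
  hPsum : ∑ u, P u = 1

attribute [instance] FinSCM.fintypeE FinSCM.decEqE FinSCM.fintypeU

variable {V : Type} [Fintype V] [DecidableEq V] {Dom : V → Type}

/-- The solution of the submodel `M_{X=x}` at unit `u`. -/
def solve (M : FinSCM V Dom) (X : Finset V) (x : ∀ v, Dom v)
    (u : ∀ e, M.UDom e) (v : V) : Dom v :=
  if v ∈ X then x v
  else M.f v (fun w => if h : M.ord w < M.ord v then solve M X x u w else x w) u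
termination_by M.ord v
decreasing_by exact h

/-- Probability of an event over units. -/
noncomputable def pr (M : FinSCM V Dom) (A : (∀ e, M.UDom e) → Prop) : ℝ :=
  ∑ u ∈ univ.filter A, M.P u


private theorem solveA_eq {I : Type} [Fintype I]
    (M : FinSCM V Dom) (Wb : I → V) (pav : I → ∀ v, Dom v) (a : ∀ v, Dom v)
    (hapa : ∀ i, ∀ v ∈ M.pa (Wb i), a v = pav i v)
    (u : ∀ e, M.UDom e) (i : I) :
    solve M (M.pa (Wb i)) (pav i) u (Wb i) = M.f (Wb i) a u := by
  have hnm : Wb i ∉ M.pa (Wb i) := fun h => lt_irrefl _ (M.hord _ _ h)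
  rw [solve, if_neg hnm]
  apply M.hf
  · intro w hw
    split
    · rw [solve, if_pos hw]
      exact (hapa i w hw).symm
    · exact (hapa i w hw).symm
  · intro e _; rfl

private theorem solveB_eq {I : Type} [Fintype I]
    (M : FinSCM V Dom) (Wb : I → V) (wv : ∀ i, Dom (Wb i)) (a : ∀ v, Dom v)
    (u : ∀ e, M.UDom e)
    (haev : ∀ i, a (Wb i) = wv i)
    (hfa : ∀ i, M.f (Wb i) a u = wv i) (v : V) :
    solve M (univ \ univ.image Wb) a u v = a v := by
  have H : ∀ n v, M.ord v = n → solve M (univ \ univ.image Wb) a u v = a v := by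
    intro n
    induction n using Nat.strong_induction_on with
    | _ n ih => ?_
    intro v hn
    subst hn
    by_cases hv : v ∈ univ.image Wb
    · obtain ⟨i, -, rfl⟩ := mem_image.mp hv
      rw [solve, if_neg (by simp [hv])]
      rw [haev i, ← hfa i]
      apply M.hf
      · intro w hw
        have hlt : M.ord w < M.ord (Wb i) := M.hord _ _ hw
        rw [dif_pos hlt]
        exact ih (M.ord w) hlt w rfl
      · intro e _; rfl
    · rw [solve, if_pos (by simp [hv])]
  exact H _ v rfl

/-- Theorem 4, sufficiency direction.  Consider a consistent ctf-factor
`P(⋀ᵢ W_{i[paᵢ]} = wᵢ)`: consistency means all value assignments to each variable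
appearing in events and subscripts agree, i.e. there is a single joint assignment
`a : V → Dom` consistent with `w_*` and with all the parent-intervention values
`⋃ pa(w)`.  Then, with `W = V(W_*)` and `W' = V ∖ W`, the ctf-factor equals the
interventional (layer-2) probability `P_{w'}(w)`: the probability, in the submodel
`M_{W' = a|_{W'}}`, that the variables of `W` attain the values `a|_W`. -/
theorem consistent_ctf_factor_is_interventional
    {I : Type} [Fintype I]
    (M : FinSCM V Dom)
    (Wb : I → V) (wv : ∀ i, Dom (Wb i)) (pav : I → ∀ v, Dom v)
    (a : ∀ v, Dom v)
    -- a is consistent with the event values w_*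
    (haev : ∀ i, a (Wb i) = wv i)
    -- a is consistent with all parent-intervention values pa(w)
    (hapa : ∀ i, ∀ v ∈ M.pa (Wb i), a v = pav i v) :
    pr M (fun u => ∀ i, solve M (M.pa (Wb i)) (pav i) u (Wb i) = wv i)
      = pr M (fun u => ∀ i, solve M (univ \ univ.image Wb) a u (Wb i) = wv i) := by
  have key : ∀ u, (∀ i, solve M (M.pa (Wb i)) (pav i) u (Wb i) = wv i)
      ↔ (∀ i, solve M (univ \ univ.image Wb) a u (Wb i) = wv i) := by
    intro u
    have hA : ∀ i, solve M (M.pa (Wb i)) (pav i) u (Wb i) = M.f (Wb i) a u :=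
      solveA_eq M Wb pav a hapa u
    constructor
    · intro h i
      have hfa : ∀ j, M.f (Wb j) a u = wv j := fun j => (hA j).symm.trans (h j)
      rw [solveB_eq M Wb wv a u haev hfa (Wb i), haev i]
    · intro h i
      rw [hA i]
      have hall : ∀ v, solve M (univ \ univ.image Wb) a u v = a v := by
        intro v
        by_cases hv : v ∈ univ.image Wb
        · obtain ⟨j, -, rfl⟩ := mem_image.mp hv
          rw [h j, haev j]
        · rw [solve, if_pos (by simp [hv])]
      have hB : solve M (univ \ univ.image Wb) a u (Wb i) = M.f (Wb i) a u := by
        rw [solve, if_neg (by simp)]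
        apply M.hf
        · intro w hw
          split
          · exact hall w
          · rfl
        · intro e _; rfl
      rw [← hB, h i]
  unfold pr
  apply Finset.sum_congr
  · ext u
    simp only [mem_filter, mem_univ, true_and]
    exact key u
  · intro u _; rfl
end
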